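/- Let M be an o-minimal structure and let S be a definable family of nonempty intervals in M (each with endpoints in M ∪ {−∞,+∞}). Let k ≥ 1 be the maximum cardinality of a pairwise disjoint subfamily of S. Then S has a tame transversal of size k: S can be covered by k subfamilies, each of which extends to a definable type. -/

import Mathlib

open FirstOrder Set

/-- `M` is an o-minimal `L`-structure: a densely linearly ordered structure without endpoints,
whose order is `∅`-definable, and in which every definable (with parameters) subset of `M`
is a finite union of points and open intervals with endpoints in `M ∪ {±∞}`. -/
def IsOMinimal (L : FirstOrder.Language) (M : Type*) [L.Structure M] [LinearOrder M] : Prop :=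
  Nonempty M ∧ DenselyOrdered M ∧ NoMinOrder M ∧ NoMaxOrder M ∧
  Set.Definable (∅ : Set M) L {v : Fin 2 → M | v 0 < v 1} ∧
  ∀ s : Set M, Set.Definable₁ (Set.univ : Set M) L s →
    ∃ F : Finset (Set M), s = ⋃₀ (F : Set (Set M)) ∧
      ∀ t ∈ F, (∃ a : M, t = {a}) ∨ (∃ a b : M, t = Set.Ioo a b) ∨
        (∃ a : M, t = Set.Ioi a) ∨ (∃ a : M, t = Set.Iio a) ∨ t = Set.univ

/-- The fiber over `u` of a set `D ⊆ M^{m+n}`, i.e. the set `φ(u, M^n)`. -/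
def famFiber {M : Type*} {m n : ℕ} (D : Set (Fin m ⊕ Fin n → M)) (u : Fin m → M) :
    Set (Fin n → M) :=
  {v | Sum.elim u v ∈ D}

/-- An `A`-definable family of subsets of `M^n`: the family of fibers `φ(u, M^n)` for `u`
ranging over an `A`-definable index set `Ω`, where `φ` is `A`-definable. -/
def IsDefFamily (L : FirstOrder.Language) {M : Type*} [L.Structure M] (A : Set M) (n : ℕ)
    (S : Set (Set (Fin n → M))) : Prop :=
  ∃ (m : ℕ) (Ω : Set (Fin m → M)) (D : Set (Fin m ⊕ Fin n → M)),
    Set.Definable A L Ω ∧ Set.Definable A L D ∧ S = famFiber D '' Ω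

/-- A family of sets is downward directed: it does not contain `∅` and any two members
contain a common member. -/
def DirectedFam {α : Type*} (S : Set (Set α)) : Prop :=
  ∅ ∉ S ∧ ∀ X ∈ S, ∀ Y ∈ S, ∃ Z ∈ S, Z ⊆ X ∩ Y

/-- `S` is finer than `F`: every member of `F` contains a member of `S`. -/
def FinerThan {α : Type*} (S F : Set (Set α)) : Prop :=
  ∀ X ∈ F, ∃ Y ∈ S, Y ⊆ X

/-- A (complete) `n`-type over `M`: an ultrafilter on the Boolean algebra of definable
subsets of `M^n`. -/
def IsTypeOn (L : FirstOrder.Language) {M : Type*} [L.Structure M] (n : ℕ)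
    (p : Set (Set (Fin n → M))) : Prop :=
  (∀ X ∈ p, Set.Definable (Set.univ : Set M) L X) ∧
  ∅ ∉ p ∧
  (∀ X ∈ p, ∀ Y ∈ p, X ∩ Y ∈ p) ∧
  (∀ X ∈ p, ∀ Y : Set (Fin n → M), Set.Definable (Set.univ : Set M) L Y → X ⊆ Y → Y ∈ p) ∧
  (∀ X : Set (Fin n → M), Set.Definable (Set.univ : Set M) L X → X ∈ p ∨ Xᶜ ∈ p)

/-- A type `p` is `A`-definable if for every `∅`-definable `D ⊆ M^{m+n}` the set of
parameters `u` with `φ(u, M^n) ∈ p` is `A`-definable. -/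
def IsDefTypeOver (L : FirstOrder.Language) {M : Type*} [L.Structure M] (A : Set M) (n : ℕ)
    (p : Set (Set (Fin n → M))) : Prop :=
  ∀ (m : ℕ) (D : Set (Fin m ⊕ Fin n → M)), Set.Definable (∅ : Set M) L D →
    Set.Definable A L {u : Fin m → M | famFiber D u ∈ p}

/-- A family `F` is complete for a family `X` if each member of `X` either contains a member
of `F` or is disjoint from one. -/
def CompleteFor {α : Type*} (F X : Set (Set α)) : Prop :=
  ∀ Y ∈ X, ∃ Z ∈ F, Z ⊆ Y ∨ Z ∩ Y = ∅

/-- A family of subsets of `M^n` is complete if it decides every definable set. -/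
def IsCompleteFam (L : FirstOrder.Language) {M : Type*} [L.Structure M] (n : ℕ)
    (S : Set (Set (Fin n → M))) : Prop :=
  ∀ X : Set (Fin n → M), Set.Definable (Set.univ : Set M) L X → ∃ Z ∈ S, Z ⊆ X ∨ Z ∩ X = ∅

/-- `B` is a basis for the type `p`: a downward directed subfamily generating `p`. -/
def IsBasisOfType {α : Type*} (B p : Set (Set α)) : Prop :=
  B ⊆ p ∧ DirectedFam B ∧ ∀ Y ∈ p, ∃ Z ∈ B, Z ⊆ Y

/-- `p` has an `A`-definable basis. -/
def HasDefBasis (L : FirstOrder.Language) {M : Type*} [L.Structure M] (A : Set M) (n : ℕ)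
    (p : Set (Set (Fin n → M))) : Prop :=
  ∃ B, IsDefFamily L A n B ∧ IsBasisOfType B p

/-- `S` has a finite tame transversal: it is covered by finitely many subfamilies, each of
which extends to a definable type. -/
def HasFTT (L : FirstOrder.Language) {M : Type*} [L.Structure M] (n : ℕ)
    (S : Set (Set (Fin n → M))) : Prop :=
  ∃ (N : ℕ) (p : Fin N → Set (Set (Fin n → M))),
    (∀ i, IsTypeOn L n (p i) ∧ IsDefTypeOver L (Set.univ : Set M) n (p i)) ∧
    ∀ X ∈ S, ∃ i, X ∈ p i

/-- The `(m,n)`-property: among any `m` members of the family, some `n` have nonempty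
intersection. -/
def HasMNProperty {α : Type*} (S : Set (Set α)) (m n : ℕ) : Prop :=
  ∀ F : Finset (Set α), ↑F ⊆ S → F.card = m →
    ∃ G ⊆ F, G.card = n ∧ (⋂₀ (G : Set (Set α))).Nonempty

/-- The fiber over `u` of `D ⊆ M^{m+1}`, as a subset of `M`. -/
def famFiber₁ {M : Type*} {m : ℕ} (D : Set (Fin m ⊕ Fin 1 → M)) (u : Fin m → M) : Set M :=
  {x | Sum.elim u (fun _ => x) ∈ D}

/-- An `A`-definable family of subsets of `M`. -/
def IsDefFamily₁ (L : FirstOrder.Language) {M : Type*} [L.Structure M] (A : Set M)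
    (S : Set (Set M)) : Prop :=
  ∃ (m : ℕ) (Ω : Set (Fin m → M)) (D : Set (Fin m ⊕ Fin 1 → M)),
    Set.Definable A L Ω ∧ Set.Definable A L D ∧ S = famFiber₁ D '' Ω

/-- A (complete) `1`-type over `M`, as an ultrafilter on the Boolean algebra of definable
subsets of `M`. -/
def IsTypeOn₁ (L : FirstOrder.Language) {M : Type*} [L.Structure M] (p : Set (Set M)) : Prop :=
  (∀ X ∈ p, Set.Definable₁ (Set.univ : Set M) L X) ∧
  ∅ ∉ p ∧
  (∀ X ∈ p, ∀ Y ∈ p, X ∩ Y ∈ p) ∧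
  (∀ X ∈ p, ∀ Y : Set M, Set.Definable₁ (Set.univ : Set M) L Y → X ⊆ Y → Y ∈ p) ∧
  (∀ X : Set M, Set.Definable₁ (Set.univ : Set M) L X → X ∈ p ∨ Xᶜ ∈ p)

/-- A `1`-type is `A`-definable if the parameter sets of its restrictions to `∅`-definable
families are `A`-definable. -/
def IsDefTypeOver₁ (L : FirstOrder.Language) {M : Type*} [L.Structure M] (A : Set M)
    (p : Set (Set M)) : Prop :=
  ∀ (m : ℕ) (D : Set (Fin m ⊕ Fin 1 → M)), Set.Definable (∅ : Set M) L D →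
    Set.Definable A L {u : Fin m → M | famFiber₁ D u ∈ p}

/-- A point or an interval in a linear order, with endpoints in `M ∪ {±∞}`. -/
def IsPointOrInterval {M : Type*} [LinearOrder M] (s : Set M) : Prop :=
  (∃ a : M, s = {a}) ∨ (∃ a b : M, s = Set.Icc a b) ∨ (∃ a b : M, s = Set.Ico a b) ∨
  (∃ a b : M, s = Set.Ioc a b) ∨ (∃ a b : M, s = Set.Ioo a b) ∨ (∃ a : M, s = Set.Ici a) ∨
  (∃ a : M, s = Set.Iic a) ∨ (∃ a : M, s = Set.Ioi a) ∨ (∃ a : M, s = Set.Iio a) ∨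
  s = Set.univ


/-!
The proof is the greedy piercing argument for intervals, with definable types in place of
points. Let `R` be the set of points lying above some member of `S`. By o-minimality `R` is
empty, unbounded below, or has an infimum `c`; accordingly let `q` be the type at `+∞`, at `-∞`,
or one of `c⁻`, `c`, `c⁺` (depending on whether `c ∈ R` and whether some member of `S` lies
below `c`). Every member of `S` outside `q` lies strictly to the right of some set in `q`, while
for every set `Z` in `q` some member of `S` lies below `Z`. So every disjoint subfamily avoiding
`q` can be enlarged by a member of `S`, and outside `q` the bound on disjoint subfamilies drops
from `k + 1` to `k`. Since `q` is definable, the members of `S` outside `q` again form a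
definable family, and induction on `k` yields the `k` types.
-/

open FirstOrder FirstOrder.Language Filter

section Definability

variable {L : FirstOrder.Language} {M : Type*} [L.Structure M] {A : Set M}

theorem Set.Definable.exists_one_var {α : Type*} {S : Set (α ⊕ Fin 1 → M)}
    (hS : A.Definable L S) : A.Definable L {v | ∃ x : M, Sum.elim v (fun _ => x) ∈ S} := by
  convert hS.exists_of_finite using 1
  ext v
  refine ⟨fun ⟨x, hx⟩ => ⟨_, hx⟩, fun ⟨u, hu⟩ => ⟨u 0, ?_⟩⟩
  rwa [show (fun _ => u 0) = u from funext fun i => congrArg u (Subsingleton.elim 0 i)]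

theorem Set.Definable.forall_one_var {α : Type*} {S : Set (α ⊕ Fin 1 → M)}
    (hS : A.Definable L S) : A.Definable L {v | ∀ x : M, Sum.elim v (fun _ => x) ∈ S} := by
  convert hS.compl.exists_one_var.compl using 1
  ext v
  simp

theorem Set.Definable.setOf_lt [LT M] (hlt : A.Definable L {v : Fin 2 → M | v 0 < v 1})
    {α : Type*} {f g : (α → M) → M} (hf : A.DefinableFun L f) (hg : A.DefinableFun L g) :
    A.Definable L {v | f v < g v} :=
  hlt.preimage_map (F := fun v => ![f v, g v])
    (by simpa [DefinableMap, Fin.forall_fin_two] using ⟨hf, hg⟩)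

theorem Set.Definable.definable₁_famFiber₁ {m : ℕ} {D : Set (Fin m ⊕ Fin 1 → M)}
    (hD : (univ : Set M).Definable L D) (u : Fin m → M) :
    (univ : Set M).Definable₁ L (famFiber₁ D u) :=
  hD.preimage_map (F := fun v : Fin 1 → M => Sum.elim u fun _ => v 0) <| by
    rintro (i | i)
    · exact L.definableFun_const _ (mem_univ (u i))
    · exact DefinableFun.proj L

theorem Set.Definable.setOf_subset_famFiber₁ {m : ℕ} {D : Set (Fin m ⊕ Fin 1 → M)}
    {s : M → Set M} (hD : A.Definable L D) (hs : A.Definable L {v : Fin 2 → M | v 1 ∈ s (v 0)}) :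
    A.Definable L {w : Fin m ⊕ Fin 1 → M | s (w (Sum.inr 0)) ⊆ famFiber₁ D (w ∘ Sum.inl)} := by
  have hs' := hs.preimage_comp
    (![Sum.inl (Sum.inr 0), Sum.inr 0] : Fin 2 → (Fin m ⊕ Fin 1) ⊕ Fin 1)
  have hD' := hD.preimage_map (F := fun z : (Fin m ⊕ Fin 1) ⊕ Fin 1 → M =>
      Sum.elim (z ∘ Sum.inl ∘ Sum.inl) fun _ => z (Sum.inr 0))
    (by rintro (i | i) <;> exact DefinableFun.proj L)
  exact (hs'.himp hD').forall_one_var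

theorem Set.Definable.setOf_exists_subset_famFiber₁ {m : ℕ} {D : Set (Fin m ⊕ Fin 1 → M)}
    {p : M → Prop} {s : M → Set M} (hD : A.Definable L D)
    (hp : A.Definable L {v : Fin 1 → M | p (v 0)})
    (hs : A.Definable L {v : Fin 2 → M | v 1 ∈ s (v 0)}) :
    A.Definable L {u : Fin m → M | ∃ b, p b ∧ s b ⊆ famFiber₁ D u} :=
  ((hp.preimage_comp Sum.inr).inter (hD.setOf_subset_famFiber₁ hs)).exists_one_var

theorem IsDefFamily₁.definable₁_setOf_exists_subset_Iic [LinearOrder M] {S : Set (Set M)}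
    (hS : IsDefFamily₁ L A S) (hlt : A.Definable L {v : Fin 2 → M | v 0 < v 1}) :
    A.Definable₁ L {c | ∃ X ∈ S, X ⊆ Iic c} := by
  obtain ⟨m, Ω, D, hΩ, hD, rfl⟩ := hS
  unfold Definable₁
  convert ((hΩ.preimage_comp Sum.inr).inter
    ((hD.compl.setOf_subset_famFiber₁ (s := Ioi) hlt).preimage_comp Sum.swap)).exists_of_finite
    using 1
  ext v
  refine exists_exists_and_eq_and.trans (exists_congr fun u => and_congr_right fun _ => ?_)
  show _ ↔ Ioi (v 0) ⊆ (famFiber₁ D u)ᶜ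
  rw [subset_compl_comm, compl_Ioi]

end Definability

theorem Filter.hasBasis_pure_const {M : Type*} (c : M) :
    (pure c : Filter M).HasBasis (fun _ : M => True) fun _ => {c} :=
  ⟨fun _ => ⟨fun h => ⟨c, trivial, singleton_subset_iff.2 h⟩, fun ⟨_, _, h⟩ => h rfl⟩⟩

section Order

variable {M : Type*} [LinearOrder M]

theorem IsPointOrInterval.ordConnected {X : Set M} (h : IsPointOrInterval X) :
    X.OrdConnected := by
  rcases h with ⟨a, rfl⟩ | ⟨a, b, rfl⟩ | ⟨a, b, rfl⟩ | ⟨a, b, rfl⟩ | ⟨a, b, rfl⟩ |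
    ⟨a, rfl⟩ | ⟨a, rfl⟩ | ⟨a, rfl⟩ | ⟨a, rfl⟩ | rfl <;> infer_instance

theorem Set.OrdConnected.forall_lt_of_subset_compl {s t : Set M} (hs : s.OrdConnected)
    (ht : t.OrdConnected) (hst : s ⊆ tᶜ) {a b : M} (ha : a ∈ s) (hb : b ∈ t) (hab : a ≤ b) :
    ∀ x ∈ s, ∀ y ∈ t, x < y := by
  intro x hx y hy
  by_contra! hyx
  rcases le_or_gt a y with hay | hya
  · exact hst (hs.out ha hx ⟨hay, hyx⟩) hy
  · exact hst ha (ht.out hy hb ⟨hya.le, hab⟩)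

theorem Set.OrdConnected.mem_atTop_of_not_bddAbove {Y : Set M} (hY : Y.OrdConnected) {y : M}
    (hy : y ∈ Y) (hunbdd : ¬BddAbove Y) : Y ∈ atTop := by
  refine mem_of_superset (Ici_mem_atTop y) fun x hx => ?_
  obtain ⟨z, hz, hxz⟩ := not_bddAbove_iff.1 hunbdd x
  exact hY.out hy hz ⟨hx, hxz.le⟩

/- The filters of the types `c⁻` and `c⁺`. -/
def justBelow (c : M) : Filter M := ⨅ (b) (_ : b < c), 𝓟 (Ioo b c)

def justAbove (c : M) : Filter M := ⨅ (b) (_ : c < b), 𝓟 (Ioo c b)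

theorem hasBasis_justBelow [NoMinOrder M] (c : M) :
    (justBelow c).HasBasis (· < c) (Ioo · c) :=
  hasBasis_biInf_principal' (fun b hb b' hb' => ⟨max b b', max_lt hb hb',
    Ioo_subset_Ioo_left (le_max_left _ _), Ioo_subset_Ioo_left (le_max_right _ _)⟩) (exists_lt c)

theorem hasBasis_justAbove [NoMaxOrder M] (c : M) :
    (justAbove c).HasBasis (c < ·) (Ioo c ·) :=
  hasBasis_biInf_principal' (fun b hb b' hb' => ⟨min b b', lt_min hb hb',
    Ioo_subset_Ioo_right (min_le_left _ _), Ioo_subset_Ioo_right (min_le_right _ _)⟩) (exists_gt c)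

end Order

section DisjointBound

variable {α : Type*}

def HasDisjointBound (S : Set (Set α)) (k : ℕ) : Prop :=
  ∀ F : Finset (Set α), ↑F ⊆ S → (↑F : Set (Set α)).Pairwise (fun X Y => X ∩ Y = ∅) → F.card ≤ k

variable {S T : Set (Set α)} {k : ℕ}

theorem HasDisjointBound.mono (h : HasDisjointBound S k) (hTS : T ⊆ S) : HasDisjointBound T k :=
  fun F hF => h F (hF.trans hTS)

theorem HasDisjointBound.card_le_of_forall_inter_eq_empty (h : HasDisjointBound S (k + 1))
    {F : Finset (Set α)} (hFS : ↑F ⊆ S) (hF : (↑F : Set (Set α)).Pairwise (fun X Y => X ∩ Y = ∅))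
    {X : Set α} (hXS : X ∈ S) (hX : X.Nonempty) (hXF : ∀ Y ∈ F, X ∩ Y = ∅) : F.card ≤ k := by
  classical
  have hXnF : X ∉ F := fun hXF' => hX.ne_empty (by simpa using hXF X hXF')
  have hsymm : Std.Symm (fun X Y : Set α => X ∩ Y = ∅) := ⟨fun X Y h => by rwa [inter_comm]⟩
  have := h (insert X F) (by simpa [insert_subset_iff] using ⟨hXS, hFS⟩) <| by
    rw [Finset.coe_insert, pairwise_insert_of_symm]
    exact ⟨hF, fun Y hY _ => hXF Y hY⟩
  rwa [Finset.card_insert_of_notMem hXnF, add_le_add_iff_right] at this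

end DisjointBound

section Piercing

variable {M : Type*} [LinearOrder M] {S : Set (Set M)} {k : ℕ}

/- Each member of the subfamily lies strictly to the right of a basis set of `f`; a member of `S`
below a basis set contained in all of these is disjoint from the whole subfamily. -/
theorem HasDisjointBound.sep_compl_mem {ι : Type*} {f : Filter M} {p : ι → Prop}
    {s : ι → Set M} (h : HasDisjointBound S (k + 1)) (hconv : ∀ Y ∈ S, Y.OrdConnected)
    (hf : f.HasBasis p s) (hs : ∀ i, p i → (s i).OrdConnected)
    (hbelow : ∀ i, p i → ∃ X ∈ S, X.Nonempty ∧ ∀ x ∈ X, ∃ z ∈ s i, x ≤ z)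
    (hnotBelow : ∀ i, p i → ∀ Y ∈ S, ∃ z ∈ s i, ∃ y ∈ Y, z ≤ y) :
    HasDisjointBound {Y ∈ S | Yᶜ ∈ f} k := by
  intro F hF hdisj
  have hright : ∀ Y ∈ F, ∃ Z ∈ f, ∀ z ∈ Z, ∀ y ∈ Y, z < y := by
    intro Y hY
    obtain ⟨hYS, hYc⟩ := hF hY
    obtain ⟨i, hi, hsub⟩ := hf.mem_iff.1 hYc
    obtain ⟨z, hz, y, hy, hzy⟩ := hnotBelow i hi Y hYS
    exact ⟨s i, hf.mem_of_mem hi, (hs i hi).forall_lt_of_subset_compl (hconv Y hYS) hsub hz hy hzy⟩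
  choose! Z hZ hlt using hright
  obtain ⟨j, hj, hjZ⟩ := hf.mem_iff.1 ((biInter_finset_mem F).2 hZ)
  obtain ⟨X, hXS, hXne, hX⟩ := hbelow j hj
  refine h.card_le_of_forall_inter_eq_empty (fun Y hY => (hF hY).1) hdisj hXS hXne fun Y hY => ?_
  refine eq_empty_of_forall_notMem fun x ⟨hxX, hxY⟩ => ?_
  obtain ⟨z, hz, hxz⟩ := hX x hxX
  exact (hxz.trans_lt (hlt Y hY z (mem_iInter₂.1 (hjZ hz) Y hY) x hxY)).false

variable (hk : HasDisjointBound S (k + 1)) (hconv : ∀ Y ∈ S, Y.OrdConnected)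
  (hne : ∀ Y ∈ S, Y.Nonempty)
include hk hconv hne

theorem HasDisjointBound.sep_compl_mem_atBot [Nonempty M] [NoMinOrder M]
    (hR : ¬BddBelow {c | ∃ X ∈ S, X ⊆ Iic c}) : HasDisjointBound {Y ∈ S | Yᶜ ∈ atBot} k := by
  refine hk.sep_compl_mem hconv atBot_basis_Iio (fun _ _ => ordConnected_Iio) (fun b _ => ?_)
    fun b _ Y hY => ?_
  · obtain ⟨r, ⟨X, hXS, hXr⟩, hrb⟩ := not_bddBelow_iff.1 hR b
    exact ⟨X, hXS, hne X hXS, fun x hx => ⟨r, hrb, hXr hx⟩⟩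
  · obtain ⟨y, hy⟩ := hne Y hY
    obtain ⟨z, hz⟩ := exists_lt (min b y)
    exact ⟨z, hz.trans_le (min_le_left _ _), y, hy, (hz.trans_le (min_le_right _ _)).le⟩

theorem HasDisjointBound.sep_compl_mem_justAbove [DenselyOrdered M] [NoMaxOrder M] {c : M}
    (hR : IsGLB {c | ∃ X ∈ S, X ⊆ Iic c} c) (hc : ¬∃ X ∈ S, X ⊆ Iic c) :
    HasDisjointBound {Y ∈ S | Yᶜ ∈ justAbove c} k := by
  refine hk.sep_compl_mem hconv (hasBasis_justAbove c) (fun _ _ => ordConnected_Ioo)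
    (fun b hb => ?_) fun b hb Y hY => ?_
  · obtain ⟨r, ⟨X, hXS, hXr⟩, hcr, hrb⟩ := hR.exists_between' hc hb
    exact ⟨X, hXS, hne X hXS, fun x hx => ⟨r, ⟨hcr, hrb⟩, hXr hx⟩⟩
  · obtain ⟨y, hy, hcy⟩ := not_subset.1 fun hYc => hc ⟨Y, hY, hYc⟩
    obtain ⟨z, hcz, hz⟩ := exists_between (lt_min hb (not_le.1 hcy))
    exact ⟨z, ⟨hcz, hz.trans_le (min_le_left _ _)⟩, y, hy, (hz.trans_le (min_le_right _ _)).le⟩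

theorem HasDisjointBound.sep_compl_mem_justBelow [DenselyOrdered M] [NoMinOrder M] {c : M}
    (hR : c ∈ lowerBounds {c | ∃ X ∈ S, X ⊆ Iic c}) {X₀ : Set M} (hX₀S : X₀ ∈ S)
    (hX₀ : X₀ ⊆ Iio c) : HasDisjointBound {Y ∈ S | Yᶜ ∈ justBelow c} k := by
  refine hk.sep_compl_mem hconv (hasBasis_justBelow c) (fun _ _ => ordConnected_Ioo)
    (fun b hb => ⟨X₀, hX₀S, hne X₀ hX₀S, fun x hx => ?_⟩) fun b hb Y hY => ?_
  · obtain ⟨z, hz, hzc⟩ := exists_between (max_lt hb (hX₀ hx))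
    exact ⟨z, ⟨(le_max_left _ _).trans_lt hz, hzc⟩, ((le_max_right _ _).trans_lt hz).le⟩
  · obtain ⟨x, hbx, hxc⟩ := exists_between hb
    obtain ⟨y, hy, hxy⟩ := not_subset.1 fun hYx => (hR ⟨Y, hY, hYx⟩).not_gt hxc
    exact ⟨x, ⟨hbx, hxc⟩, y, hy, (not_le.1 hxy).le⟩

theorem HasDisjointBound.sep_compl_mem_pure {c : M} (hc : ∃ X ∈ S, X ⊆ Iic c)
    (hnotBelow : ∀ X ∈ S, ¬X ⊆ Iio c) :
    HasDisjointBound {Y ∈ S | Yᶜ ∈ (pure c : Filter M)} k := by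
  obtain ⟨X, hXS, hXc⟩ := hc
  refine hk.sep_compl_mem hconv (hasBasis_pure_const c) (fun _ _ => ordConnected_singleton)
    (fun _ _ => ⟨X, hXS, hne X hXS, fun x hx => ⟨c, rfl, hXc hx⟩⟩) fun _ _ Y hY => ?_
  obtain ⟨y, hy, hcy⟩ := not_subset.1 (hnotBelow Y hY)
  exact ⟨c, rfl, y, hy, not_lt.1 hcy⟩

end Piercing

namespace IsOMinimal

variable {L : FirstOrder.Language} {M : Type*} [L.Structure M] [LinearOrder M]
  (hM : IsOMinimal L M)
include hM

theorem mem_or_compl_mem_of_definable₁ {f : Filter M}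
    (hhalf : ∀ a, (Iio a ∈ f ∨ Ici a ∈ f) ∧ (Iic a ∈ f ∨ Ioi a ∈ f)) {X : Set M}
    (hX : (univ : Set M).Definable₁ L X) : X ∈ f ∨ Xᶜ ∈ f := by
  classical
  let Decided : Set M → Prop := fun X => X ∈ f ∨ Xᶜ ∈ f
  have compl {X : Set M} (h : Decided X) : Decided Xᶜ := by
    show Xᶜ ∈ f ∨ Xᶜᶜ ∈ f
    rw [compl_compl]
    exact h.symm
  have union {X Y : Set M} (hX : Decided X) (hY : Decided Y) : Decided (X ∪ Y) := by
    rcases hX with hX | hX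
    · exact .inl (mem_of_superset hX subset_union_left)
    rcases hY with hY | hY
    · exact .inl (mem_of_superset hY subset_union_right)
    · exact .inr (by rw [compl_union]; exact inter_mem hX hY)
  have inter {X Y : Set M} (hX : Decided X) (hY : Decided Y) : Decided (X ∩ Y) := by
    simpa only [compl_union, compl_compl] using compl (union (compl hX) (compl hY))
  have hIio (a : M) : Decided (Iio a) := by simpa only [Decided, compl_Iio] using (hhalf a).1
  have hIic (a : M) : Decided (Iic a) := by simpa only [Decided, compl_Iic] using (hhalf a).2
  obtain ⟨-, -, -, -, -, hdecomp⟩ := hM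
  obtain ⟨F, rfl, hF⟩ := hdecomp X hX
  clear hX
  induction F using Finset.induction_on with
  | empty => exact .inr (by simp)
  | insert t F _ ih =>
    rw [Finset.coe_insert, sUnion_insert]
    refine union ?_ (ih fun t ht => hF t (Finset.mem_insert_of_mem ht))
    rcases hF t (Finset.mem_insert_self t F) with
      ⟨a, rfl⟩ | ⟨a, b, rfl⟩ | ⟨a, rfl⟩ | ⟨a, rfl⟩ | rfl
    · rw [← Icc_self, ← Iic_inter_Ici, ← compl_Iio]
      exact inter (hIic a) (compl (hIio a))
    · rw [← Ioi_inter_Iio, ← compl_Iic]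
      exact inter (compl (hIic a)) (hIio b)
    · rw [← compl_Iic]
      exact compl (hIic a)
    · exact hIio a
    · exact .inl univ_mem

theorem exists_isGLB_of_definable₁ {X : Set M} (hX : (univ : Set M).Definable₁ L X)
    (hne : X.Nonempty) (hbdd : BddBelow X) : ∃ c, IsGLB X c := by
  obtain ⟨-, _, _, -, -, hdecomp⟩ := hM
  obtain ⟨F, rfl, hF⟩ := hdecomp X hX
  clear hX
  induction F using Finset.induction_on with
  | empty => simp at hne
  | insert t F _ ih =>
    rw [Finset.coe_insert, sUnion_insert] at hne hbdd ⊢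
    have ht : t.Nonempty → ∃ c, IsGLB t c := by
      rcases hF t (Finset.mem_insert_self t F) with
        ⟨a, rfl⟩ | ⟨a, b, rfl⟩ | ⟨a, rfl⟩ | ⟨a, rfl⟩ | rfl
      · exact fun _ => ⟨a, isGLB_singleton⟩
      · exact fun h => ⟨a, isGLB_Ioo (nonempty_Ioo.1 h)⟩
      · exact fun _ => ⟨a, isGLB_Ioi⟩
      · exact absurd (hbdd.mono subset_union_left) (not_bddBelow_Iio a)
      · exact absurd (hbdd.mono subset_union_left) not_bddBelow_univ
    have hF' : (⋃₀ (F : Set (Set M))).Nonempty → ∃ c, IsGLB (⋃₀ (F : Set (Set M))) c :=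
      fun h => ih (fun t ht => hF t (Finset.mem_insert_of_mem ht)) h (hbdd.mono subset_union_right)
    rcases t.eq_empty_or_nonempty with rfl | htne
    · simpa using hF' (by simpa using hne)
    rcases (⋃₀ (F : Set (Set M))).eq_empty_or_nonempty with hFe | hFne
    · simpa [hFe] using ht htne
    obtain ⟨a, ha⟩ := ht htne
    obtain ⟨b, hb⟩ := hF' hFne
    exact ⟨a ⊓ b, ha.union hb⟩

end IsOMinimal

/-- A definable type over `M`, represented by a filter on `M`: the type consists of the
definable members of the filter. -/
structure IsDefinableType (L : FirstOrder.Language) {M : Type*} [L.Structure M] (f : Filter M) :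
    Prop where
  neBot : f.NeBot
  mem_or_compl_mem : ∀ X : Set M, (univ : Set M).Definable₁ L X → X ∈ f ∨ Xᶜ ∈ f
  definable_setOf_famFiber₁_mem : ∀ {m : ℕ} {D : Set (Fin m ⊕ Fin 1 → M)},
    (univ : Set M).Definable L D → (univ : Set M).Definable L {u | famFiber₁ D u ∈ f}

namespace IsDefinableType

variable {L : FirstOrder.Language} {M : Type*} [L.Structure M] {f : Filter M}

theorem isTypeOn₁ (hf : IsDefinableType L f) :
    IsTypeOn₁ L {X | (univ : Set M).Definable₁ L X ∧ X ∈ f} :=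
  have := hf.neBot
  ⟨fun _ hX => hX.1, fun h => empty_notMem f h.2,
    fun _ hX _ hY => ⟨hX.1.inter hY.1, inter_mem hX.2 hY.2⟩,
    fun _ hX _ hY hXY => ⟨hY, mem_of_superset hX.2 hXY⟩,
    fun X hX => (hf.mem_or_compl_mem X hX).imp (⟨hX, ·⟩) (⟨hX.compl, ·⟩)⟩

theorem isDefTypeOver₁ (hf : IsDefinableType L f) :
    IsDefTypeOver₁ L (univ : Set M) {X | (univ : Set M).Definable₁ L X ∧ X ∈ f} := by
  intro m D hD
  have hD' := hD.mono (empty_subset univ)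
  simpa only [mem_ofPred_eq, hD'.definable₁_famFiber₁, true_and]
    using hf.definable_setOf_famFiber₁_mem hD'

theorem of_hasBasis [LinearOrder M] (hM : IsOMinimal L M) [f.NeBot] {p : M → Prop}
    {s : M → Set M} (hf : f.HasBasis p s)
    (hhalf : ∀ a, (Iio a ∈ f ∨ Ici a ∈ f) ∧ (Iic a ∈ f ∨ Ioi a ∈ f))
    (hp : (univ : Set M).Definable L {v : Fin 1 → M | p (v 0)})
    (hs : (univ : Set M).Definable L {v : Fin 2 → M | v 1 ∈ s (v 0)}) :
    IsDefinableType L f where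
  neBot := ‹_›
  mem_or_compl_mem _ hX := hM.mem_or_compl_mem_of_definable₁ hhalf hX
  definable_setOf_famFiber₁_mem hD := by
    simpa only [hf.mem_iff] using hD.setOf_exists_subset_famFiber₁ hp hs

end IsDefinableType

section DefinableTypes

variable {L : FirstOrder.Language} {M : Type*} [L.Structure M] [LinearOrder M]
  (hM : IsOMinimal L M)
include hM

theorem isDefinableType_atTop : IsDefinableType L (atTop : Filter M) := by
  obtain ⟨_, -, -, _, hlt, -⟩ := id hM
  exact .of_hasBasis hM atTop_basis_Ioi
    (fun a => ⟨.inr (Ici_mem_atTop a), .inr (Ioi_mem_atTop a)⟩)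
    definable_univ (hlt.mono (empty_subset _))

theorem isDefinableType_atBot : IsDefinableType L (atBot : Filter M) := by
  obtain ⟨_, -, _, -, hlt, -⟩ := id hM
  exact .of_hasBasis hM atBot_basis_Iio
    (fun a => ⟨.inl (Iio_mem_atBot a), .inl (Iic_mem_atBot a)⟩)
    definable_univ ((hlt.mono (empty_subset _)).setOf_lt (.proj L) (.proj L))

theorem isDefinableType_pure (c : M) : IsDefinableType L (pure c : Filter M) :=
  .of_hasBasis hM (hasBasis_pure_const c) (fun a => ⟨lt_or_ge c a, le_or_gt c a⟩)
    definable_univ ((DefinableFun.proj L).ofPred_eq_const (mem_univ c))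

theorem isDefinableType_justBelow (c : M) : IsDefinableType L (justBelow c) := by
  obtain ⟨_, _, _, -, hlt, -⟩ := id hM
  have hlt := hlt.mono (empty_subset univ)
  have hc (n : ℕ) : (univ : Set M).DefinableFun L fun _ : Fin n → M => c :=
    L.definableFun_const _ (mem_univ c)
  have hf := hasBasis_justBelow c
  have : (justBelow c).NeBot := hf.neBot_iff.2 nonempty_Ioo.2
  refine .of_hasBasis hM hf (fun a => ?_) (hlt.setOf_lt (.proj L) (hc 1))
    ((hlt.setOf_lt (.proj L) (.proj L)).inter (hlt.setOf_lt (.proj L) (hc 2)))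
  rcases lt_or_ge a c with hac | hca
  · exact ⟨.inr (hf.mem_iff.2 ⟨a, hac, Ioo_subset_Ioi_self.trans Ioi_subset_Ici_self⟩),
      .inr (hf.mem_iff.2 ⟨a, hac, Ioo_subset_Ioi_self⟩)⟩
  · obtain ⟨b, hb⟩ := exists_lt c
    exact ⟨.inl (hf.mem_iff.2 ⟨b, hb, fun x hx => hx.2.trans_le hca⟩),
      .inl (hf.mem_iff.2 ⟨b, hb, fun x hx => (hx.2.trans_le hca).le⟩)⟩

theorem isDefinableType_justAbove (c : M) : IsDefinableType L (justAbove c) := by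
  obtain ⟨_, _, -, _, hlt, -⟩ := id hM
  have hlt := hlt.mono (empty_subset univ)
  have hc (n : ℕ) : (univ : Set M).DefinableFun L fun _ : Fin n → M => c :=
    L.definableFun_const _ (mem_univ c)
  have hf := hasBasis_justAbove c
  have : (justAbove c).NeBot := hf.neBot_iff.2 nonempty_Ioo.2
  refine .of_hasBasis hM hf (fun a => ?_) (hlt.setOf_lt (hc 1) (.proj L))
    ((hlt.setOf_lt (hc 2) (.proj L)).inter (hlt.setOf_lt (.proj L) (.proj L)))
  rcases lt_or_ge c a with hca | hac
  · exact ⟨.inl (hf.mem_iff.2 ⟨a, hca, Ioo_subset_Iio_self⟩),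
      .inl (hf.mem_iff.2 ⟨a, hca, Ioo_subset_Iio_self.trans Iio_subset_Iic_self⟩)⟩
  · obtain ⟨b, hb⟩ := exists_gt c
    exact ⟨.inr (hf.mem_iff.2 ⟨b, hb, fun x hx => (hac.trans_lt hx.1).le⟩),
      .inr (hf.mem_iff.2 ⟨b, hb, fun x hx => hac.trans_lt hx.1⟩)⟩

end DefinableTypes

namespace IsDefFamily₁

variable {L : FirstOrder.Language} {M : Type*} [L.Structure M] {S : Set (Set M)}
  (hS : IsDefFamily₁ L (univ : Set M) S)
include hS

theorem definable₁_of_mem {X : Set M} (hX : X ∈ S) : (univ : Set M).Definable₁ L X := by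
  obtain ⟨m, Ω, D, -, hD, rfl⟩ := hS
  obtain ⟨u, -, rfl⟩ := hX
  exact hD.definable₁_famFiber₁ u

theorem sep_notMem {f : Filter M} (hf : IsDefinableType L f) :
    IsDefFamily₁ L (univ : Set M) {Y ∈ S | Y ∉ f} := by
  obtain ⟨m, Ω, D, hΩ, hD, rfl⟩ := hS
  refine ⟨m, Ω ∩ {u | famFiber₁ D u ∈ f}ᶜ, D,
    hΩ.inter (hf.definable_setOf_famFiber₁_mem hD).compl, hD, ?_⟩
  ext Y
  constructor
  · rintro ⟨⟨u, hu, rfl⟩, hY⟩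
    exact ⟨u, ⟨hu, hY⟩, rfl⟩
  · rintro ⟨u, ⟨hu, hY⟩, rfl⟩
    exact ⟨⟨u, hu, rfl⟩, hY⟩

variable [LinearOrder M] (hM : IsOMinimal L M) (hne : ∀ Y ∈ S, Y.Nonempty)
  (hconv : ∀ Y ∈ S, Y.OrdConnected)
include hM hne hconv

theorem exists_isDefinableType_hasDisjointBound {k : ℕ} (hk : HasDisjointBound S (k + 1)) :
    ∃ f : Filter M, IsDefinableType L f ∧ HasDisjointBound {Y ∈ S | Y ∉ f} k := by
  suffices ∃ f : Filter M, IsDefinableType L f ∧ HasDisjointBound {Y ∈ S | Yᶜ ∈ f} k by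
    obtain ⟨f, hf, hfk⟩ := this
    exact ⟨f, hf, hfk.mono fun Y ⟨hY, hYf⟩ =>
      ⟨hY, (hf.mem_or_compl_mem Y (hS.definable₁_of_mem hY)).resolve_left hYf⟩⟩
  obtain ⟨_, _, _, _, hlt, -⟩ := id hM
  set R := {c | ∃ X ∈ S, X ⊆ Iic c}
  rcases R.eq_empty_or_nonempty with hR | hR
  · refine ⟨atTop, isDefinableType_atTop hM, fun F hF _ => ?_⟩
    have : F = ∅ := Finset.eq_empty_of_forall_notMem fun Y hY => by
      obtain ⟨hYS, hYc⟩ := hF hY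
      refine compl_notMem ((hconv Y hYS).mem_atTop_of_not_bddAbove (hne Y hYS).some_mem
        fun ⟨c, hc⟩ => (eq_empty_iff_forall_notMem.1 hR c) ⟨Y, hYS, hc⟩) hYc
    simp [this]
  by_cases hbdd : BddBelow R
  swap
  · exact ⟨atBot, isDefinableType_atBot hM, hk.sep_compl_mem_atBot hconv hne hbdd⟩
  obtain ⟨c, hc⟩ := hM.exists_isGLB_of_definable₁
    (hS.definable₁_setOf_exists_subset_Iic (hlt.mono (empty_subset _))) hR hbdd
  by_cases hcR : c ∈ R
  · by_cases hX₀ : ∃ X ∈ S, X ⊆ Iio c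
    · obtain ⟨X, hXS, hX⟩ := hX₀
      exact ⟨justBelow c, isDefinableType_justBelow hM c,
        hk.sep_compl_mem_justBelow hconv hne hc.1 hXS hX⟩
    · exact ⟨pure c, isDefinableType_pure hM c,
        hk.sep_compl_mem_pure hconv hne hcR fun X hX hXc => hX₀ ⟨X, hX, hXc⟩⟩
  · exact ⟨justAbove c, isDefinableType_justAbove hM c,
      hk.sep_compl_mem_justAbove hconv hne hc hcR⟩

theorem exists_isDefinableType_cover {k : ℕ} (hk : HasDisjointBound S k) :
    ∃ g : Fin k → Filter M, (∀ i, IsDefinableType L (g i)) ∧ ∀ X ∈ S, ∃ i, X ∈ g i := by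
  induction k generalizing S with
  | zero =>
    exact ⟨finZeroElim, finZeroElim,
      fun X hX => absurd (hk {X} (by simpa using hX) (by simp)) (by simp)⟩
  | succ k ih =>
    obtain ⟨f, hf, hfk⟩ := hS.exists_isDefinableType_hasDisjointBound hM hne hconv hk
    obtain ⟨g, hg, hcover⟩ := ih (hS.sep_notMem hf) (fun Y hY => hne Y hY.1)
      (fun Y hY => hconv Y hY.1) hfk
    refine ⟨Fin.cons f g, Fin.cases hf hg, fun X hX => ?_⟩
    by_cases hXf : X ∈ f
    · exact ⟨0, hXf⟩
    · obtain ⟨i, hi⟩ := hcover X ⟨hX, hXf⟩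
      exact ⟨i.succ, by simpa using hi⟩

end IsDefFamily₁

theorem statement11_general (L : FirstOrder.Language) (M : Type*) [L.Structure M] [LinearOrder M]
    (hM : IsOMinimal L M) (S : Set (Set M)) (hS : IsDefFamily₁ L (Set.univ : Set M) S)
    (hint : ∀ X ∈ S, X.Nonempty ∧ IsPointOrInterval X)
    (k : ℕ)
    (hbound : ∀ F : Finset (Set M), ↑F ⊆ S →
      ((↑F : Set (Set M)).Pairwise fun X Y => X ∩ Y = ∅) → F.card ≤ k) :
    ∃ p : Fin k → Set (Set M),
      (∀ i, IsTypeOn₁ L (p i) ∧ IsDefTypeOver₁ L (Set.univ : Set M) (p i)) ∧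
      ∀ X ∈ S, ∃ i, X ∈ p i := by
  obtain ⟨g, hg, hcover⟩ := hS.exists_isDefinableType_cover hM (fun X hX => (hint X hX).1)
    (fun X hX => (hint X hX).2.ordConnected) hbound
  refine ⟨fun i => {X | (univ : Set M).Definable₁ L X ∧ X ∈ g i},
    fun i => ⟨(hg i).isTypeOn₁, (hg i).isDefTypeOver₁⟩, fun X hX => ?_⟩
  obtain ⟨i, hi⟩ := hcover X hX
  exact ⟨i, hS.definable₁_of_mem hX, hi⟩

/-- a definable family of nonempty intervals in `M`, whose maximal pairwise
disjoint subfamilies have size `k`, is covered by `k` subfamilies each extending to a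
definable type. -/
theorem statement11 (L : FirstOrder.Language) (M : Type*) [L.Structure M] [LinearOrder M]
    (hM : IsOMinimal L M) (S : Set (Set M)) (hS : IsDefFamily₁ L (Set.univ : Set M) S)
    (hint : ∀ X ∈ S, X.Nonempty ∧ IsPointOrInterval X)
    (k : ℕ) (hk : 1 ≤ k)
    (hmax : ∃ F : Finset (Set M), ↑F ⊆ S ∧ F.card = k ∧
      (↑F : Set (Set M)).Pairwise fun X Y => X ∩ Y = ∅)
    (hbound : ∀ F : Finset (Set M), ↑F ⊆ S →
      ((↑F : Set (Set M)).Pairwise fun X Y => X ∩ Y = ∅) → F.card ≤ k) :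
    ∃ p : Fin k → Set (Set M),
      (∀ i, IsTypeOn₁ L (p i) ∧ IsDefTypeOver₁ L (Set.univ : Set M) (p i)) ∧
      ∀ X ∈ S, ∃ i, X ∈ p i :=
  statement11_general L M hM S hS hint k hbound
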